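/- arXiv:1211.3071 — 7 statements merged into one kernel-verified Lean document; each statement's English description precedes it below -/
import Mathlib

section
/- Let V₁ and V₂ be two metrizable locally convex topological vector spaces over ℝ, let f : V₁ → V₂ be a continuous linear map whose range is dense in V₂, let O be an open subset of V₂ and let Õ = f⁻¹(O). Then the restriction f|_Õ : Õ → O is a homotopy equivalence of topological spaces. -/
/-
It suffices to find a continuous `g : O → V₁` such that for every `y ∈ O` the segment
`[y, f (g y)]` lies in `O`: then the straight-line homotopies between `y` and `f (g y)`, and
between `x` and `g (f x)` (whose image under `f` is such a segment), stay in `O` and `Õ`.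

Such a `g` is a partition-of-unity average `∑ φ_c • v_c` over the centres `c` of metric balls
`B(c, r_c / 3)` in `O`, where `B(c, r_c)` lies in a convex subset `W_c ⊆ O` and, by density,
`f v_c ∈ B(c, r_c / 3)`. Among the finitely many balls meeting a point `y`, one of largest radius,
`B(c₀, r_{c₀} / 3)`, is so big that all the others lie in `B(c₀, r_{c₀}) ⊆ W_{c₀}`; hence `y` and
`f (g y)` both lie in the convex set `W_{c₀}`.
-/

open Set Metric

namespace ContinuousMap

variable {X E : Type*} [TopologicalSpace X] [AddCommGroup E] [TopologicalSpace E]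
  [IsTopologicalAddGroup E] [Module ℝ E] [ContinuousSMul ℝ E]

theorem homotopic_of_segment_subset {S : Set E} (p q : C(X, S))
    (hpq : ∀ x, segment ℝ (p x : E) (q x) ⊆ S) : p.Homotopic q := by
  let H := Homotopy.affine (((ContinuousMap.id E).restrict S).comp p)
    (((ContinuousMap.id E).restrict S).comp q)
  refine ⟨{ toFun := fun tx => ⟨H tx, hpq tx.2 ?_⟩
            continuous_toFun := H.continuous.subtype_mk _
            map_zero_left := fun x => Subtype.ext (H.apply_zero x)
            map_one_left := fun x => Subtype.ext (H.apply_one x) }⟩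
  exact Path.range_segment (E := E) _ _ ▸ mem_range_self tx.1

end ContinuousMap

theorem PartitionOfUnity.exists_ball_subset_of_isSubordinate {X : Type*} [PseudoMetricSpace X]
    (φ : PartitionOfUnity X X) {r : X → ℝ} (hφ : φ.IsSubordinate fun c => ball c (r c))
    (y : X) :
    ∃ c₀, y ∈ ball c₀ (3 * r c₀) ∧ ∀ c, φ c y ≠ 0 → ball c (r c) ⊆ ball c₀ (3 * r c₀) := by
  have hne : (φ.finsupport y).Nonempty :=
    Finset.nonempty_of_sum_ne_zero (by rw [φ.sum_finsupport (mem_univ y)]; exact one_ne_zero)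
  obtain ⟨c₀, hc₀, hmax⟩ := (φ.finsupport y).exists_max_image r hne
  have hy : ∀ c, φ c y ≠ 0 → dist y c < r c := fun c hc => hφ c (subset_closure hc)
  have hyc₀ := hy c₀ ((φ.mem_finsupport y).1 hc₀)
  refine ⟨c₀, by rw [mem_ball]; linarith [dist_nonneg (x := y) (y := c₀)], fun c hc z hz => ?_⟩
  have hrc : r c ≤ r c₀ := hmax c ((φ.mem_finsupport y).2 hc)
  calc dist z c₀ ≤ dist z c + dist y c + dist y c₀ := by
        linarith [dist_triangle z c c₀, dist_triangle_left c c₀ y]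
    _ < 3 * r c₀ := by linarith [mem_ball.1 hz, hy c hc]

theorem exists_continuous_segment_subset_of_denseRange {V₁ V₂ : Type*}
    [AddCommGroup V₁] [Module ℝ V₁] [TopologicalSpace V₁] [ContinuousAdd V₁]
    [ContinuousSMul ℝ V₁] [AddCommMonoid V₂] [Module ℝ V₂] [TopologicalSpace V₂]
    [LocallyConvexSpace ℝ V₂] [TopologicalSpace.MetrizableSpace V₂]
    {f : V₁ →L[ℝ] V₂} (hf : DenseRange f)
    {O : Set V₂} (hO : IsOpen O) : ∃ g : C(O, V₁), ∀ y : O, segment ℝ (y : V₂) (f (g y)) ⊆ O := by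
  let := TopologicalSpace.metrizableSpaceMetric O
  have hlocal : ∀ c : O, ∃ r > 0, ∃ W ⊆ O, Convex ℝ W ∧ Subtype.val '' ball c r ⊆ W := by
    intro c
    obtain ⟨W, ⟨hWc, hWconv⟩, hWO⟩ :=
      (LocallyConvexSpace.convex_basis (𝕜 := ℝ) (c : V₂)).mem_iff.1 (hO.mem_nhds c.2)
    obtain ⟨r, hr, hrW⟩ :=
      Metric.mem_nhds_iff.1 (continuous_subtype_val.continuousAt.preimage_mem_nhds hWc)
    exact ⟨r, hr, W, hWO, hWconv, image_subset_iff.2 hrW⟩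
  choose r hr W hWO hWconv hrW using hlocal
  obtain ⟨φ, hφ⟩ := PartitionOfUnity.exists_isSubordinate isClosed_univ (fun c => ball c (r c / 3))
    (fun _ => isOpen_ball) fun c _ => mem_iUnion.2 ⟨c, mem_ball_self (by linarith [hr c])⟩
  have hv : ∀ c : O, ∃ v, f v ∈ Subtype.val '' ball c (r c / 3) := fun c =>
    hf.exists_mem_open (hO.isOpenMap_subtype_val _ isOpen_ball)
      ⟨c, c, mem_ball_self (by linarith [hr c]), rfl⟩
  choose v hv using hv
  refine ⟨⟨fun y => ∑ᶠ c, φ c y • v c, φ.continuous_finsum_smul fun _ _ _ => continuousAt_const⟩,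
    fun y => ?_⟩
  obtain ⟨c₀, hyc₀, hc₀⟩ := φ.exists_ball_subset_of_isSubordinate hφ y
  have hball : Subtype.val '' ball c₀ (3 * (r c₀ / 3)) ⊆ W c₀ := by
    rw [mul_div_cancel₀ _ three_ne_zero]; exact hrW c₀
  have hy : (y : V₂) ∈ W c₀ := hball (mem_image_of_mem _ hyc₀)
  have hgy : ∑ᶠ c, φ c y • v c ∈ f ⁻¹' W c₀ :=
    φ.finsum_smul_mem_convex (g := fun c _ => v c) (mem_univ y)
      (fun c hc => hball (image_mono (hc₀ c hc) (hv c))) ((hWconv c₀).linear_preimage f.toLinearMap)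
  exact ((hWconv c₀).segment_subset hy hgy).trans (hWO c₀)

theorem stmt0_general
    {V₁ V₂ : Type*}
    [AddCommGroup V₁] [Module ℝ V₁] [TopologicalSpace V₁]
    [IsTopologicalAddGroup V₁] [ContinuousSMul ℝ V₁]
    [AddCommGroup V₂] [Module ℝ V₂] [TopologicalSpace V₂]
    [IsTopologicalAddGroup V₂] [ContinuousSMul ℝ V₂]
    [LocallyConvexSpace ℝ V₂] [TopologicalSpace.MetrizableSpace V₂]
    (f : V₁ →L[ℝ] V₂) (hdense : DenseRange f)
    (O : Set V₂) (hO : IsOpen O) :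
    ∃ e : ContinuousMap.HomotopyEquiv (f ⁻¹' O) O,
      ∀ x : (f ⁻¹' O), (e.toFun x : V₂) = f x := by
  obtain ⟨g, hg⟩ := exists_continuous_segment_subset_of_denseRange hdense hO
  let toFun : C(f ⁻¹' O, O) := (f : C(V₁, V₂)).restrictPreimage O
  let invFun : C(O, f ⁻¹' O) :=
    ⟨fun y => ⟨g y, hg y (right_mem_segment ℝ _ _)⟩, (map_continuous g).subtype_mk _⟩
  refine ⟨⟨toFun, invFun, ?_, ?_⟩, fun _ => rfl⟩
  · refine ContinuousMap.homotopic_of_segment_subset _ _ fun x z hz => ?_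
    have hfz : f z ∈ segment ℝ (f (g (toFun x))) (f x) :=
      image_segment ℝ f.toLinearMap.toAffineMap _ _ ▸ mem_image_of_mem f hz
    exact hg (toFun x) (segment_symm ℝ (E := V₂) _ _ ▸ hfz)
  · exact ContinuousMap.homotopic_of_segment_subset _ _ fun y =>
      (segment_symm ℝ (E := V₂) _ _).trans_subset (hg y)

/-- **Palais' theorem.** Let `V₁` and `V₂` be two metrizable locally convex topological
vector spaces over `ℝ`, let `f : V₁ → V₂` be a continuous linear map whose range is dense
in `V₂`, let `O` be an open subset of `V₂` and `Õ = f ⁻¹' O`. Then the restriction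
`f|_Õ : Õ → O` is a homotopy equivalence. -/
theorem stmt0
    {V₁ V₂ : Type*}
    [AddCommGroup V₁] [Module ℝ V₁] [TopologicalSpace V₁]
    [IsTopologicalAddGroup V₁] [ContinuousSMul ℝ V₁]
    [LocallyConvexSpace ℝ V₁] [TopologicalSpace.MetrizableSpace V₁]
    [AddCommGroup V₂] [Module ℝ V₂] [TopologicalSpace V₂]
    [IsTopologicalAddGroup V₂] [ContinuousSMul ℝ V₂]
    [LocallyConvexSpace ℝ V₂] [TopologicalSpace.MetrizableSpace V₂]
    (f : V₁ →L[ℝ] V₂) (hdense : DenseRange f)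
    (O : Set V₂) (hO : IsOpen O) :
    ∃ e : ContinuousMap.HomotopyEquiv (f ⁻¹' O) O,
      ∀ x : (f ⁻¹' O), (e.toFun x : V₂) = f x :=
  stmt0_general f hdense O hO
end

section
/- Let E be a real Banach space, H a real Hilbert space, and j : E → H an injective continuous linear map with dense range. Let B ⊆ A be open subsets of H, and set Ã = j⁻¹(A), B̃ = j⁻¹(B) with the subspace topology of E. Then the restrictions j|_Ã : Ã → A and j|_B̃ : B̃ → B are homotopy equivalences (hence they induce isomorphisms between the relative homologies of the pairs (Ã, B̃) and (A, B)). -/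
/-!
For open `A ⊆ H` it suffices to find a continuous `g : A → E` such that the segment from
`j (g a)` to `a` lies in `A` for every `a`: then straight-line homotopies show that `g` is a
homotopy inverse of `j` on `A` and, after applying the linear map `j`, on `j ⁻¹' A`.
Such a `g` is glued by a partition of unity from locally constant choices: near `a₀`, any
`c` with `j c` close to `a₀` (which exists by density of the range) works, and the admissible
values at `a` contain a convex set, namely the union of the balls about `a` inside `A`.
-/

open Metric Set Topology

section Homotopy

variable {X E F : Type*} [TopologicalSpace X]
  [AddCommGroup E] [Module ℝ E] [TopologicalSpace E] [ContinuousAdd E] [ContinuousSMul ℝ E]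
  [AddCommGroup F] [Module ℝ F] [TopologicalSpace F] [ContinuousAdd F] [ContinuousSMul ℝ F]

theorem ContinuousMap.homotopic_of_forall_segment_subset {s : Set E} {f₀ f₁ : C(X, s)}
    (h : ∀ x, segment ℝ (f₀ x : E) (f₁ x) ⊆ s) : f₀.Homotopic f₁ :=
  ⟨{ toFun := fun p => ⟨AffineMap.lineMap (f₀ p.2 : E) (f₁ p.2) (p.1 : ℝ),
        h p.2 (lineMap_mem_segment ℝ _ _ p.1.2)⟩
     continuous_toFun := by simp only [AffineMap.lineMap_apply_module]; fun_prop
     map_zero_left := fun x => by simp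
     map_one_left := fun x => by simp }⟩

theorem ContinuousLinearMap.exists_homotopyEquiv_restrictPreimage (j : E →L[ℝ] F) {A : Set F}
    (g : C(A, E)) (hg : ∀ a : A, segment ℝ (j (g a)) a ⊆ A) :
    ∃ e : ContinuousMap.HomotopyEquiv (j ⁻¹' A) A, ∀ x, (e.toFun x : F) = j x := by
  let g' : C(A, j ⁻¹' A) := ⟨fun a => ⟨g a, hg a (left_mem_segment ℝ _ _)⟩, by fun_prop⟩
  refine ⟨⟨(j : C(E, F)).restrictPreimage A, g', ?_, ?_⟩, fun _ => rfl⟩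
  · refine ContinuousMap.homotopic_of_forall_segment_subset fun x => ?_
    rw [← image_subset_iff]
    exact (image_segment ℝ (j : E →ₗ[ℝ] F).toAffineMap _ _).trans_subset (hg _)
  · exact ContinuousMap.homotopic_of_forall_segment_subset hg

end Homotopy

section Approximation

variable {E H : Type*} [AddCommGroup E] [Module ℝ E] [TopologicalSpace E] [ContinuousAdd E]
  [ContinuousSMul ℝ E] [NormedAddCommGroup H] [NormedSpace ℝ H]

theorem convex_setOf_exists_ball_subset (A : Set H) (a : H) :
    Convex ℝ {z | ∃ ρ, ball a ρ ⊆ A ∧ z ∈ ball a ρ} := by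
  rintro z₁ ⟨ρ₁, hA₁, hz₁⟩ z₂ ⟨ρ₂, hA₂, hz₂⟩ s t hs ht hst
  refine ⟨max ρ₁ ρ₂, ?_, convex_ball a _ (ball_subset_ball (le_max_left _ _) hz₁)
    (ball_subset_ball (le_max_right _ _) hz₂) hs ht hst⟩
  rcases max_choice ρ₁ ρ₂ with h | h <;> rw [h] <;> assumption

theorem DenseRange.exists_continuous_segment_subset {j : E →L[ℝ] H} (hj : DenseRange j)
    {A : Set H} (hA : IsOpen A) : ∃ g : C(A, E), ∀ a : A, segment ℝ (j (g a)) a ⊆ A := by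
  let t (a : A) : Set E := j ⁻¹' {z | ∃ ρ, ball (a : H) ρ ⊆ A ∧ z ∈ ball (a : H) ρ}
  have hloc (a₀ : A) : ∃ c : E, ∀ᶠ a in 𝓝 a₀, c ∈ t a := by
    obtain ⟨ε, hε, hεA⟩ := isOpen_iff.1 hA a₀ a₀.2
    obtain ⟨c, hc⟩ := hj.exists_dist_lt (a₀ : H) (by positivity : 0 < ε / 4)
    refine ⟨c, eventually_nhds_iff.2 ⟨ε / 4, by positivity, fun a ha => ?_⟩⟩
    rw [Subtype.dist_eq] at ha
    refine ⟨ε / 2, (ball_subset_ball' (by linarith)).trans hεA, mem_ball.2 ?_⟩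
    linarith [dist_triangle (j c) a₀ a, dist_comm (a₀ : H) (j c), dist_comm (a : H) a₀]
  obtain ⟨g, hg⟩ := exists_continuous_forall_mem_convex_of_local_const
    (fun a : A => (convex_setOf_exists_ball_subset A a).linear_preimage (j : E →ₗ[ℝ] H)) hloc
  refine ⟨g, fun a => ?_⟩
  obtain ⟨ρ, hρA, hρ⟩ := hg a
  exact ((convex_ball _ _).segment_subset hρ (mem_ball_self (pos_of_mem_ball hρ))).trans hρA

end Approximation

theorem stmt1_general {E H : Type*}
    [NormedAddCommGroup E] [NormedSpace ℝ E]
    [NormedAddCommGroup H] [InnerProductSpace ℝ H]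
    (j : E →L[ℝ] H) (hdense : DenseRange j)
    (A B : Set H) (hA : IsOpen A) (hB : IsOpen B) :
    (∃ e : ContinuousMap.HomotopyEquiv (j ⁻¹' A) A,
      ∀ x : (j ⁻¹' A), (e.toFun x : H) = j x) ∧
    (∃ e : ContinuousMap.HomotopyEquiv (j ⁻¹' B) B,
      ∀ x : (j ⁻¹' B), (e.toFun x : H) = j x) := by
  obtain ⟨gA, hgA⟩ := hdense.exists_continuous_segment_subset hA
  obtain ⟨gB, hgB⟩ := hdense.exists_continuous_segment_subset hB
  exact ⟨j.exists_homotopyEquiv_restrictPreimage gA hgA,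
    j.exists_homotopyEquiv_restrictPreimage gB hgB⟩

/-- Let `E` be a real Banach space, `H` a real Hilbert space, and `j : E → H` an injective
continuous linear map with dense range. Let `B ⊆ A` be open subsets of `H`, and set
`Ã = j ⁻¹' A`, `B̃ = j ⁻¹' B` with the subspace topology of `E`. Then the restrictions
`j|_Ã : Ã → A` and `j|_B̃ : B̃ → B` are homotopy equivalences. -/
theorem stmt1 {E H : Type*}
    [NormedAddCommGroup E] [NormedSpace ℝ E] [CompleteSpace E]
    [NormedAddCommGroup H] [InnerProductSpace ℝ H] [CompleteSpace H]
    (j : E →L[ℝ] H) (hinj : Function.Injective j) (hdense : DenseRange j)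
    (A B : Set H) (hA : IsOpen A) (hB : IsOpen B) (hBA : B ⊆ A) :
    (∃ e : ContinuousMap.HomotopyEquiv (j ⁻¹' A) A,
      ∀ x : (j ⁻¹' A), (e.toFun x : H) = j x) ∧
    (∃ e : ContinuousMap.HomotopyEquiv (j ⁻¹' B) B,
      ∀ x : (j ⁻¹' B), (e.toFun x : H) = j x) :=
  stmt1_general j hdense A B hA hB
end

section
/- Let H be a real Hilbert space and let P and K be bounded self-adjoint operators on H such that K is compact and P ≥ c·I for some c > 0, i.e. ⟨P x, x⟩ ≥ c‖x‖² for all x ∈ H. If the operator T = P + K is injective, then there exists μ > 0 such that the spectrum of T is disjoint from the interval [-μ, μ]; in particular T is invertible. -/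
/-!
Coercivity makes `P` invertible, so `P + K = P (1 + P⁻¹ K)` with `P⁻¹ K` compact. By the Fredholm
alternative, `1 + P⁻¹ K` is invertible as soon as it is injective, which it is because `P + K` is.
Finally, `0` lies in the resolvent set of the invertible operator `P + K`, which is open, so a
whole interval around `0` misses the spectrum.
-/

open RealInnerProductSpace

namespace IsCompactOperator

variable {𝕜 X : Type*} [NontriviallyNormedField 𝕜] [NormedAddCommGroup X] [NormedSpace 𝕜 X]
  [CompleteSpace X]

theorem isUnit_one_add_of_injective {C : X →L[𝕜] X} (hC : IsCompactOperator C)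
    (hinj : Function.Injective ⇑(1 + C)) : IsUnit (1 + C) := by
  have hnot : ¬ Module.End.HasEigenvalue (C : Module.End 𝕜 X) (-1) := by
    rw [Module.End.hasEigenvalue_iff, Submodule.ne_bot_iff]
    rintro ⟨x, hx, hx0⟩
    refine hx0 (hinj ?_)
    have hCx : C x = -x := by simpa using Module.End.mem_eigenspace_iff.mp hx
    simp [hCx]
  have hres := (hC.hasEigenvalue_or_mem_resolventSet (neg_ne_zero.mpr one_ne_zero)).resolve_left
    hnot
  rw [spectrum.mem_resolventSet_iff, map_neg, map_one, ← neg_add', IsUnit.neg_iff] at hres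
  exact hres

theorem isUnit_add_of_injective {P K : X →L[𝕜] X} (hP : IsUnit P) (hK : IsCompactOperator K)
    (hinj : Function.Injective (P + K)) : IsUnit (P + K) := by
  obtain ⟨u, rfl⟩ := hP
  have hfactor : (u : X →L[𝕜] X) + K = u * (1 + ↑u⁻¹ * K) := by
    rw [mul_add, mul_one, ← mul_assoc, Units.mul_inv, one_mul]
  rw [hfactor] at hinj ⊢
  refine u.isUnit.mul (isUnit_one_add_of_injective (hK.clm_comp _) ?_)
  exact Function.Injective.of_comp (f := u.val) hinj

end IsCompactOperator

theorem spectrum.exists_closedBall_disjoint_of_isUnit {𝕜 A : Type*} [NontriviallyNormedField 𝕜]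
    [NormedRing A] [NormedAlgebra 𝕜 A] [CompleteSpace A] {a : A} (ha : IsUnit a) :
    ∃ μ > (0 : ℝ), Disjoint (spectrum 𝕜 a) (Metric.closedBall (0 : 𝕜) μ) := by
  obtain ⟨u, rfl⟩ := ha
  obtain ⟨ε, hε, hball⟩ := Metric.isOpen_iff.mp (spectrum.isOpen_resolventSet (u : A))
    0 (spectrum.zero_mem_resolventSet_of_unit (R := 𝕜) u)
  refine ⟨ε / 2, half_pos hε, Set.disjoint_left.mpr fun r hr hr' => hr (hball ?_)⟩
  exact Metric.closedBall_subset_ball (half_lt_self hε) hr'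

theorem stmt5_general {H : Type*} [NormedAddCommGroup H] [InnerProductSpace ℝ H] [CompleteSpace H]
    (P K : H →L[ℝ] H)
    (hKcpt : IsCompactOperator (⇑K))
    (c : ℝ) (hc : 0 < c) (hPc : ∀ x : H, c * ‖x‖ ^ 2 ≤ ⟪P x, x⟫)
    (hinj : Function.Injective ⇑(P + K)) :
    ∃ μ > (0:ℝ), Disjoint (spectrum ℝ (P + K)) (Set.Icc (-μ) μ) ∧ IsUnit (P + K) := by
  have hPunit : IsUnit P := by
    refine P.isUnit_of_forall_le_norm_inner_map (c := c.toNNReal) (by simpa using hc) fun x => ?_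
    rw [Real.coe_toNNReal _ hc.le, mul_comm]
    exact (hPc x).trans (le_abs_self _)
  have hTunit := hKcpt.isUnit_add_of_injective hPunit hinj
  obtain ⟨μ, hμ, hdisj⟩ := spectrum.exists_closedBall_disjoint_of_isUnit (𝕜 := ℝ) hTunit
  refine ⟨μ, hμ, ?_, hTunit⟩
  simpa [Real.closedBall_eq_Icc] using hdisj

/-- Let `H` be a real Hilbert space and `P`, `K` bounded self-adjoint operators on `H` with
`K` compact and `P ≥ c • I` for some `c > 0`. If `T = P + K` is injective, then there exists
`μ > 0` such that the spectrum of `T` is disjoint from `[-μ, μ]`; in particular `T` is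
invertible. -/
theorem stmt5 {H : Type*} [NormedAddCommGroup H] [InnerProductSpace ℝ H] [CompleteSpace H]
    (P K : H →L[ℝ] H)
    (hP : ∀ x y : H, ⟪P x, y⟫ = ⟪x, P y⟫)
    (hK : ∀ x y : H, ⟪K x, y⟫ = ⟪x, K y⟫)
    (hKcpt : IsCompactOperator (⇑K))
    (c : ℝ) (hc : 0 < c) (hPc : ∀ x : H, c * ‖x‖ ^ 2 ≤ ⟪P x, x⟫)
    (hinj : Function.Injective ⇑(P + K)) :
    ∃ μ > (0:ℝ), Disjoint (spectrum ℝ (P + K)) (Set.Icc (-μ) μ) ∧ IsUnit (P + K) :=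
  stmt5_general P K hKcpt c hc hPc hinj
end

section
/- Let H be a real Hilbert space, f : H → ℝ continuously Fréchet differentiable with gradient ∇f, and let μ, δ, ν, ρ > 0 and c ∈ ℝ. Let t₁ < t₂ and let ψ : [t₁, t₂] → H be a continuously differentiable curve such that for every t ∈ [t₁, t₂]: ⟨∇f(ψ(t)), ψ'(t)⟩ ≤ −μ‖∇f(ψ(t))‖², ‖∇f(ψ(t))‖ ≥ δ, and ‖ψ'(t)‖ ≤ ν‖∇f(ψ(t))‖. If moreover ‖ψ(t₁)‖ = ρ/2, ‖ψ(t₂)‖ = ρ, and f(ψ(t₁)) ≤ c + μδρ/(4ν), then f(ψ(t₂)) ≤ c − μδρ/(4ν). -/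
open RealInnerProductSpace Set

/-! Along `ψ` the value of `f` drops at rate at least `μδ/ν` times the speed `‖ψ'‖`, so the
drop of `f` between `t₁` and `t₂` is at least `μδ/ν` times the displacement `‖ψ t₂ - ψ t₁‖`,
which is at least `ρ/2` by the reverse triangle inequality. -/

theorem norm_sub_le_sub_of_norm_deriv_le_deriv {E : Type*} [NormedAddCommGroup E]
    [NormedSpace ℝ E] {γ γ' : ℝ → E} {φ φ' : ℝ → ℝ} {a b : ℝ} (hab : a ≤ b)
    (hγ : ∀ t ∈ Icc a b, HasDerivAt γ (γ' t) t) (hφ : ∀ t ∈ Icc a b, HasDerivAt φ (φ' t) t)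
    (bound : ∀ t ∈ Ico a b, ‖γ' t‖ ≤ φ' t) :
    ‖γ b - γ a‖ ≤ φ b - φ a := by
  have key := image_norm_le_of_norm_deriv_right_le_deriv_boundary'
    (f := fun t => γ t - γ a) (B := fun t => φ t - φ a)
    (fun t ht => ((hγ t ht).sub_const (γ a)).continuousAt.continuousWithinAt)
    (fun t ht => ((hγ t (Ico_subset_Icc_self ht)).sub_const (γ a)).hasDerivWithinAt)
    (by simp)
    (fun t ht => ((hφ t ht).sub_const (φ a)).continuousAt.continuousWithinAt)
    (fun t ht => ((hφ t (Ico_subset_Icc_self ht)).sub_const (φ a)).hasDerivWithinAt) bound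
  exact key (right_mem_Icc.2 hab)

theorem norm_le_div_mul_neg_inner {H : Type*} [NormedAddCommGroup H] [InnerProductSpace ℝ H]
    {g v : H} {μ δ ν : ℝ} (hμ : 0 < μ) (hδ : 0 < δ)
    (h1 : ⟪g, v⟫ ≤ -μ * ‖g‖ ^ 2) (h2 : δ ≤ ‖g‖) (h3 : ‖v‖ ≤ ν * ‖g‖) :
    ‖v‖ ≤ ν / (μ * δ) * -⟪g, v⟫ := by
  have hν : 0 ≤ ν := nonneg_of_mul_nonneg_left ((norm_nonneg v).trans h3) (hδ.trans_le h2)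
  have hdescent : μ * δ * ‖g‖ ≤ -⟪g, v⟫ :=
    calc μ * δ * ‖g‖ ≤ μ * ‖g‖ * ‖g‖ := by gcongr
      _ ≤ -⟪g, v⟫ := by linarith
  calc ‖v‖ ≤ ν * ‖g‖ := h3
    _ = ν / (μ * δ) * (μ * δ * ‖g‖) := by field_simp
    _ ≤ ν / (μ * δ) * -⟪g, v⟫ := by gcongr

theorem norm_sub_le_div_mul_sub_of_inner_gradient_le {H : Type*} [NormedAddCommGroup H]
    [InnerProductSpace ℝ H] [CompleteSpace H] {f : H → ℝ} {g : H → H} {ψ ψ' : ℝ → H} {μ δ ν t₁ t₂ : ℝ}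
    (hμ : 0 < μ) (hδ : 0 < δ) (ht : t₁ ≤ t₂) (hf : ∀ x, HasGradientAt f (g x) x)
    (hψ : ∀ t ∈ Icc t₁ t₂, HasDerivAt ψ (ψ' t) t)
    (h1 : ∀ t ∈ Icc t₁ t₂, ⟪g (ψ t), ψ' t⟫ ≤ -μ * ‖g (ψ t)‖ ^ 2)
    (h2 : ∀ t ∈ Icc t₁ t₂, δ ≤ ‖g (ψ t)‖)
    (h3 : ∀ t ∈ Icc t₁ t₂, ‖ψ' t‖ ≤ ν * ‖g (ψ t)‖) :
    ‖ψ t₂ - ψ t₁‖ ≤ ν / (μ * δ) * (f (ψ t₁) - f (ψ t₂)) := by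
  have hfψ : ∀ t ∈ Icc t₁ t₂, HasDerivAt (fun s => f (ψ s)) ⟪g (ψ t), ψ' t⟫ t := fun t ht =>
    (hf (ψ t)).hasFDerivAt.comp_hasDerivAt t (hψ t ht)
  have hφ : ∀ t ∈ Icc t₁ t₂,
      HasDerivAt (fun s => ν / (μ * δ) * -f (ψ s)) (ν / (μ * δ) * -⟪g (ψ t), ψ' t⟫) t :=
    fun t ht => ((hfψ t ht).neg).const_mul _
  have := norm_sub_le_sub_of_norm_deriv_le_deriv ht hψ hφ fun t ht =>
    norm_le_div_mul_neg_inner hμ hδ (h1 t (Ico_subset_Icc_self ht))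
      (h2 t (Ico_subset_Icc_self ht)) (h3 t (Ico_subset_Icc_self ht))
  linarith

theorem stmt6_general {H : Type*} [NormedAddCommGroup H] [InnerProductSpace ℝ H] [CompleteSpace H]
    (f : H → ℝ) (g : H → H)
    (hf : ∀ x : H, HasGradientAt f (g x) x)
    (μ δ ν ρ : ℝ) (hμ : 0 < μ) (hδ : 0 < δ) (hν : 0 < ν)
    (c t₁ t₂ : ℝ) (ht : t₁ < t₂)
    (ψ ψ' : ℝ → H)
    (hψ : ∀ t ∈ Icc t₁ t₂, HasDerivAt ψ (ψ' t) t)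
    (h1 : ∀ t ∈ Icc t₁ t₂, ⟪g (ψ t), ψ' t⟫ ≤ -μ * ‖g (ψ t)‖ ^ 2)
    (h2 : ∀ t ∈ Icc t₁ t₂, δ ≤ ‖g (ψ t)‖)
    (h3 : ∀ t ∈ Icc t₁ t₂, ‖ψ' t‖ ≤ ν * ‖g (ψ t)‖)
    (hρ1 : ‖ψ t₁‖ = ρ / 2) (hρ2 : ‖ψ t₂‖ = ρ)
    (hinit : f (ψ t₁) ≤ c + μ * δ * ρ / (4 * ν)) :
    f (ψ t₂) ≤ c - μ * δ * ρ / (4 * ν) := by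
  have hdisplacement : ρ / 2 ≤ ‖ψ t₂ - ψ t₁‖ := by
    linarith [norm_sub_norm_le (ψ t₂) (ψ t₁)]
  have hdrop : μ * δ * ρ / (2 * ν) ≤ f (ψ t₁) - f (ψ t₂) := by
    have := hdisplacement.trans
      (norm_sub_le_div_mul_sub_of_inner_gradient_le hμ hδ ht.le hf hψ h1 h2 h3)
    rw [div_mul_eq_mul_div, le_div_iff₀ (by positivity)] at this
    rw [div_le_iff₀ (by positivity)]
    linarith
  have hsplit : μ * δ * ρ / (2 * ν) = 2 * (μ * δ * ρ / (4 * ν)) := by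
    field_simp
    ring
  linarith

/-- Deformation estimate: if along a `C¹` curve `ψ` on `[t₁, t₂]` one has
`⟪∇f(ψ t), ψ' t⟫ ≤ -μ‖∇f(ψ t)‖²`, `‖∇f(ψ t)‖ ≥ δ` and `‖ψ' t‖ ≤ ν‖∇f(ψ t)‖`, with
`‖ψ t₁‖ = ρ/2`, `‖ψ t₂‖ = ρ` and `f (ψ t₁) ≤ c + μδρ/(4ν)`, then
`f (ψ t₂) ≤ c - μδρ/(4ν)`. -/
theorem stmt6 {H : Type*} [NormedAddCommGroup H] [InnerProductSpace ℝ H] [CompleteSpace H]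
    (f : H → ℝ) (g : H → H)
    (hf : ∀ x : H, HasGradientAt f (g x) x) (hgcont : Continuous g)
    (μ δ ν ρ : ℝ) (hμ : 0 < μ) (hδ : 0 < δ) (hν : 0 < ν) (hρ : 0 < ρ)
    (c t₁ t₂ : ℝ) (ht : t₁ < t₂)
    (ψ ψ' : ℝ → H)
    (hψ : ∀ t ∈ Icc t₁ t₂, HasDerivAt ψ (ψ' t) t)
    (hψ'cont : ContinuousOn ψ' (Icc t₁ t₂))
    (h1 : ∀ t ∈ Icc t₁ t₂, ⟪g (ψ t), ψ' t⟫ ≤ -μ * ‖g (ψ t)‖ ^ 2)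
    (h2 : ∀ t ∈ Icc t₁ t₂, δ ≤ ‖g (ψ t)‖)
    (h3 : ∀ t ∈ Icc t₁ t₂, ‖ψ' t‖ ≤ ν * ‖g (ψ t)‖)
    (hρ1 : ‖ψ t₁‖ = ρ / 2) (hρ2 : ‖ψ t₂‖ = ρ)
    (hinit : f (ψ t₁) ≤ c + μ * δ * ρ / (4 * ν)) :
    f (ψ t₂) ≤ c - μ * δ * ρ / (4 * ν) :=
  stmt6_general f g hf μ δ ν ρ hμ hδ hν c t₁ t₂ ht ψ ψ' hψ h1 h2 h3 hρ1 hρ2 hinit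
end

section
/- Let H be a real Hilbert space, f : H → ℝ continuously Fréchet differentiable with gradient ∇f, Y : H → H continuous, and μ, δ, ν, ρ > 0, c ∈ ℝ such that: ⟨∇f(x), Y(x)⟩ ≤ −μ‖∇f(x)‖² for all x ∈ H, and for every x with ρ/2 ≤ ‖x‖ ≤ ρ one has ‖∇f(x)‖ ≥ δ and ‖Y(x)‖ ≤ ν‖∇f(x)‖. Let T ∈ (0, ∞], and let ψ : [0, T) → H be differentiable with ψ'(t) = Y(ψ(t)) for all t, ‖ψ(0)‖ < ρ/2, and f(ψ(0)) < c + μδρ/(4ν). Then for every t ∈ [0, T): if f(ψ(s)) > c − μδρ/(4ν) for all s ∈ [0, t], then ‖ψ(s)‖ ≤ ρ for all s ∈ [0, t]. -/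
open RealInnerProductSpace Set ENNReal

/-!
Along the flow `f ∘ ψ` is nonincreasing, with derivative `⟪∇f, Y⟫ ≤ -μ‖∇f‖²`. On the annulus
`ρ/2 ≤ ‖x‖ ≤ ρ` this is at most `-(μδ/ν)‖Y‖ = -(μδ/ν)‖ψ'‖`, so on any time interval spent in the
annulus `f ∘ ψ` drops by at least `μδ/ν` times the displacement of `ψ`. If the curve left the ball
of radius `ρ`, it would cross the annulus, with displacement at least `ρ/2`; then `f ∘ ψ` would drop
by at least `μδρ/(2ν)`, i.e. from below `c + μδρ/(4ν)` to below `c - μδρ/(4ν)`.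
-/

theorem HasGradientAt.comp_hasDerivAt {H : Type*} [NormedAddCommGroup H] [InnerProductSpace ℝ H]
    [CompleteSpace H] {f : H → ℝ} {g : H} {ψ : ℝ → H} {v : H} {t : ℝ}
    (hf : HasGradientAt f g (ψ t)) (hψ : HasDerivAt ψ v t) :
    HasDerivAt (fun r => f (ψ r)) ⟪g, v⟫ t := by
  simpa [InnerProductSpace.toDual_apply_apply, Function.comp_def] using
    hf.hasFDerivAt.comp_hasDerivAt t hψ

/-- With `k = 0` this is the monotonicity of `F`. -/
theorem mul_norm_sub_le_sub_of_mul_norm_deriv_le {E : Type*} [NormedAddCommGroup E]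
    [NormedSpace ℝ E] {ψ ψ' : ℝ → E} {F F' : ℝ → ℝ} {a b k : ℝ} (hab : a ≤ b) (hk : 0 ≤ k)
    (hψ : ∀ r ∈ Icc a b, HasDerivAt ψ (ψ' r) r) (hF : ∀ r ∈ Icc a b, HasDerivAt F (F' r) r)
    (hbound : ∀ r ∈ Ico a b, k * ‖ψ' r‖ ≤ -F' r) :
    k * ‖ψ b - ψ a‖ ≤ F a - F b := by
  have hdisp : ∀ r ∈ Icc a b, HasDerivAt (fun r => k • (ψ r - ψ a)) (k • ψ' r) r := fun r hr =>
    ((hψ r hr).sub_const (ψ a)).const_smul k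
  have hdrop : ∀ r ∈ Icc a b, HasDerivAt (fun r => F a - F r) (-F' r) r := fun r hr =>
    (hF r hr).const_sub (F a)
  have key := image_norm_le_of_norm_deriv_right_le_deriv_boundary'
    (fun r hr => (hdisp r hr).continuousAt.continuousWithinAt)
    (fun r hr => (hdisp r (Ico_subset_Icc_self hr)).hasDerivWithinAt)
    (by simp) (fun r hr => (hdrop r hr).continuousAt.continuousWithinAt)
    (fun r hr => (hdrop r (Ico_subset_Icc_self hr)).hasDerivWithinAt)
    (fun r hr => by simpa [norm_smul, abs_of_nonneg hk] using hbound r hr) ⟨hab, le_rfl⟩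
  simpa [norm_smul, abs_of_nonneg hk] using key

theorem exists_first_hitting {φ : ℝ → ℝ} {a b β : ℝ} (hab : a ≤ b)
    (hφ : ContinuousOn φ (Icc a b)) (ha : φ a ≤ β) (hb : β ≤ φ b) :
    ∃ c ∈ Icc a b, φ c = β ∧ ∀ r ∈ Icc a c, φ r ≤ β := by
  set S := Icc a b ∩ φ ⁻¹' {β}
  have hS : S.Nonempty := intermediate_value_Icc hab hφ ⟨ha, hb⟩
  have hSbdd : BddBelow S := ⟨a, fun r hr => hr.1.1⟩
  have hcS : sInf S ∈ S :=
    (hφ.preimage_isClosed_of_isClosed isClosed_Icc isClosed_singleton).csInf_mem hS hSbdd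
  refine ⟨sInf S, hcS.1, hcS.2, fun r hr => ?_⟩
  by_contra! hβ
  have hrb : r ≤ b := hr.2.trans hcS.1.2
  obtain ⟨r', ⟨har', hr'r⟩, hφr'⟩ :=
    intermediate_value_Icc hr.1 (hφ.mono (Icc_subset_Icc le_rfl hrb)) ⟨ha, hβ.le⟩
  have hr' : r' ∈ S := ⟨⟨har', hr'r.trans hrb⟩, hφr'⟩
  have hrc : r = sInf S := le_antisymm hr.2 ((csInf_le hSbdd hr').trans hr'r)
  exact hβ.ne' (hrc ▸ hcS.2)

theorem exists_last_hitting {φ : ℝ → ℝ} {a b α : ℝ} (hab : a ≤ b)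
    (hφ : ContinuousOn φ (Icc a b)) (ha : φ a ≤ α) (hb : α ≤ φ b) :
    ∃ c ∈ Icc a b, φ c = α ∧ ∀ r ∈ Icc c b, α ≤ φ r := by
  have hrefl : ContinuousOn (fun r => -φ (-r)) (Icc (-b) (-a)) :=
    (hφ.comp continuousOn_neg fun r hr => by
      simp only [mem_Icc] at hr ⊢; constructor <;> linarith).neg
  obtain ⟨c, hc, hφc, hle⟩ := exists_first_hitting (β := -α) (neg_le_neg hab) hrefl
    (by simpa using hb) (by simpa using ha)
  refine ⟨-c, ⟨by linarith [hc.2], by linarith [hc.1]⟩, by linarith, fun r hr => ?_⟩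
  have := hle (-r) ⟨neg_le_neg hr.2, by linarith [hr.1]⟩
  simp only [neg_neg] at this
  linarith

theorem exists_crossing_interval {φ : ℝ → ℝ} {a b α β : ℝ} (hab : a ≤ b)
    (hφ : ContinuousOn φ (Icc a b)) (ha : φ a ≤ α) (hαβ : α ≤ β) (hb : β ≤ φ b) :
    ∃ a' b', a ≤ a' ∧ a' ≤ b' ∧ b' ≤ b ∧ φ a' = α ∧ φ b' = β ∧
      ∀ r ∈ Icc a' b', α ≤ φ r ∧ φ r ≤ β := by
  obtain ⟨b', hb', hφb', hbelow⟩ := exists_first_hitting hab hφ (ha.trans hαβ) hb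
  obtain ⟨a', ha', hφa', habove⟩ := exists_last_hitting hb'.1
    (hφ.mono (Icc_subset_Icc le_rfl hb'.2)) ha (hφb' ▸ hαβ)
  exact ⟨a', b', ha'.1, ha'.2, hb'.2, hφa', hφb', fun r hr =>
    ⟨habove r hr, hbelow r ⟨ha'.1.trans hr.1, hr.2⟩⟩⟩

theorem div_mul_norm_le_neg_inner {H : Type*} [NormedAddCommGroup H]
    [InnerProductSpace ℝ H] {g y : H} {μ δ ν : ℝ} (hμ : 0 ≤ μ) (hδ : 0 ≤ δ) (hν : 0 < ν)
    (hinner : ⟪g, y⟫ ≤ -μ * ‖g‖ ^ 2) (hgδ : δ ≤ ‖g‖) (hyg : ‖y‖ ≤ ν * ‖g‖) :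
    μ * δ / ν * ‖y‖ ≤ -⟪g, y⟫ := by
  rw [div_mul_eq_mul_div, div_le_iff₀ hν]
  calc μ * δ * ‖y‖ ≤ μ * δ * (ν * ‖g‖) := by gcongr
    _ = ν * μ * (δ * ‖g‖) := by ring
    _ ≤ ν * μ * (‖g‖ * ‖g‖) := by gcongr
    _ = -(-μ * ‖g‖ ^ 2) * ν := by ring
    _ ≤ -⟪g, y⟫ * ν := by gcongr

theorem stmt7_general {H : Type*} [NormedAddCommGroup H] [InnerProductSpace ℝ H] [CompleteSpace H]
    (f : H → ℝ) (g : H → H)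
    (hf : ∀ x : H, HasGradientAt f (g x) x)
    (Y : H → H)
    (μ δ ν ρ : ℝ) (hμ : 0 < μ) (hδ : 0 < δ) (hν : 0 < ν) (hρ : 0 < ρ) (c : ℝ)
    (h1 : ∀ x : H, ⟪g x, Y x⟫ ≤ -μ * ‖g x‖ ^ 2)
    (h2 : ∀ x : H, ρ / 2 ≤ ‖x‖ → ‖x‖ ≤ ρ → δ ≤ ‖g x‖ ∧ ‖Y x‖ ≤ ν * ‖g x‖)
    (T : ℝ≥0∞)
    (ψ : ℝ → H)
    (hψ : ∀ t : ℝ, 0 ≤ t → ENNReal.ofReal t < T → HasDerivAt ψ (Y (ψ t)) t)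
    (h0 : ‖ψ 0‖ < ρ / 2) (hf0 : f (ψ 0) < c + μ * δ * ρ / (4 * ν)) :
    ∀ t : ℝ, 0 ≤ t → ENNReal.ofReal t < T →
      (∀ s : ℝ, 0 ≤ s → s ≤ t → c - μ * δ * ρ / (4 * ν) < f (ψ s)) →
      ∀ s : ℝ, 0 ≤ s → s ≤ t → ‖ψ s‖ ≤ ρ := by
  intro t ht htT habove s hs hst
  by_contra! hleave
  have hψ' : ∀ r ∈ Icc 0 s, HasDerivAt ψ (Y (ψ r)) r := fun r hr =>
    hψ r hr.1 ((ENNReal.ofReal_le_ofReal (hr.2.trans hst)).trans_lt htT)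
  have hF : ∀ r ∈ Icc 0 s, HasDerivAt (fun r => f (ψ r)) ⟪g (ψ r), Y (ψ r)⟫ r := fun r hr =>
    (hf (ψ r)).comp_hasDerivAt (hψ' r hr)
  obtain ⟨a, b, ha0, hab, hbs, hψa, hψb, hannulus⟩ := exists_crossing_interval hs
    (fun r hr => (hψ' r hr).continuousAt.norm.continuousWithinAt) h0.le (half_le_self hρ.le)
    hleave.le
  have hdecay : f (ψ a) ≤ f (ψ 0) := by
    simpa using mul_norm_sub_le_sub_of_mul_norm_deriv_le ha0 le_rfl
      (fun r hr => hψ' r ⟨hr.1, (hr.2.trans hab).trans hbs⟩)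
      (fun r hr => hF r ⟨hr.1, (hr.2.trans hab).trans hbs⟩)
      (fun r _ => by nlinarith [h1 (ψ r)])
  have hcross : μ * δ / ν * ‖ψ b - ψ a‖ ≤ f (ψ a) - f (ψ b) :=
    mul_norm_sub_le_sub_of_mul_norm_deriv_le hab (by positivity)
      (fun r hr => hψ' r ⟨ha0.trans hr.1, hr.2.trans hbs⟩)
      (fun r hr => hF r ⟨ha0.trans hr.1, hr.2.trans hbs⟩)
      (fun r hr => by
        obtain ⟨hgδ, hYg⟩ := h2 (ψ r) (hannulus r (Ico_subset_Icc_self hr)).1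
          (hannulus r (Ico_subset_Icc_self hr)).2
        exact div_mul_norm_le_neg_inner hμ.le hδ.le hν (h1 (ψ r)) hgδ hYg)
  have hdisp : ρ / 2 ≤ ‖ψ b - ψ a‖ := by
    linarith [norm_sub_norm_le (ψ b) (ψ a)]
  have hdrop : 2 * (μ * δ * ρ / (4 * ν)) ≤ μ * δ / ν * ‖ψ b - ψ a‖ :=
    calc 2 * (μ * δ * ρ / (4 * ν)) = μ * δ / ν * (ρ / 2) := by field_simp; ring
      _ ≤ μ * δ / ν * ‖ψ b - ψ a‖ := by gcongr
  linarith [habove b (ha0.trans hab) (hbs.trans hst)]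

/-- Trapping lemma: with `⟪∇f x, Y x⟫ ≤ -μ‖∇f x‖²` everywhere, `‖∇f x‖ ≥ δ` and
`‖Y x‖ ≤ ν‖∇f x‖` on the annulus `ρ/2 ≤ ‖x‖ ≤ ρ`, for a flow line `ψ` of `Y` on `[0, T)`
starting with `‖ψ 0‖ < ρ/2` and `f (ψ 0) < c + μδρ/(4ν)`: as long as `f ∘ ψ` stays above
`c - μδρ/(4ν)`, the curve stays in the ball of radius `ρ`. -/
theorem stmt7 {H : Type*} [NormedAddCommGroup H] [InnerProductSpace ℝ H] [CompleteSpace H]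
    (f : H → ℝ) (g : H → H)
    (hf : ∀ x : H, HasGradientAt f (g x) x) (hgcont : Continuous g)
    (Y : H → H) (hY : Continuous Y)
    (μ δ ν ρ : ℝ) (hμ : 0 < μ) (hδ : 0 < δ) (hν : 0 < ν) (hρ : 0 < ρ) (c : ℝ)
    (h1 : ∀ x : H, ⟪g x, Y x⟫ ≤ -μ * ‖g x‖ ^ 2)
    (h2 : ∀ x : H, ρ / 2 ≤ ‖x‖ → ‖x‖ ≤ ρ → δ ≤ ‖g x‖ ∧ ‖Y x‖ ≤ ν * ‖g x‖)
    (T : ℝ≥0∞) (hT : 0 < T)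
    (ψ : ℝ → H)
    (hψ : ∀ t : ℝ, 0 ≤ t → ENNReal.ofReal t < T → HasDerivAt ψ (Y (ψ t)) t)
    (h0 : ‖ψ 0‖ < ρ / 2) (hf0 : f (ψ 0) < c + μ * δ * ρ / (4 * ν)) :
    ∀ t : ℝ, 0 ≤ t → ENNReal.ofReal t < T →
      (∀ s : ℝ, 0 ≤ s → s ≤ t → c - μ * δ * ρ / (4 * ν) < f (ψ s)) →
      ∀ s : ℝ, 0 ≤ s → s ≤ t → ‖ψ s‖ ≤ ρ :=
  stmt7_general f g hf Y μ δ ν ρ hμ hδ hν hρ c h1 h2 T ψ hψ h0 hf0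
end

section
/- Let H be a real Hilbert space, f : H → ℝ continuously Fréchet differentiable with gradient ∇f, Y : H → H a map, and μ > 0 such that ⟨∇f(x), Y(x)⟩ ≤ −μ‖∇f(x)‖² for all x ∈ H. Let ψ : [0, ∞) → H be differentiable with ψ'(t) = Y(ψ(t)) for all t ≥ 0, and suppose c ∈ ℝ satisfies f(ψ(t)) > c for all t ≥ 0. Then the integral ∫₀^∞ ‖∇f(ψ(t))‖² dt is finite and bounded by (f(ψ(0)) − c)/μ. -/
open RealInnerProductSpace Set MeasureTheory

/-!
Along the flow line, `t ↦ f (ψ t)` has derivative `⟪∇f, Y⟫ ≤ -μ ‖∇f‖²`, so on every `[0, T]`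
we get `μ ∫₀ᵀ ‖∇f(ψ t)‖² dt ≤ f (ψ 0) - f (ψ T) < f (ψ 0) - c`. The bound is uniform in `T`,
and `[0, ∞)` is the increasing union of the intervals `[0, n]`.
-/

theorem HasGradientAt.hasDerivAt_comp {H : Type*} [NormedAddCommGroup H] [InnerProductSpace ℝ H]
    [CompleteSpace H] {f : H → ℝ} {g' : H} {ψ : ℝ → H} {v : H} {t : ℝ}
    (hf : HasGradientAt f g' (ψ t)) (hψ : HasDerivAt ψ v t) :
    HasDerivAt (fun s => f (ψ s)) ⟪g', v⟫ t := by
  have h := hf.hasFDerivAt.comp_hasDerivAt t hψ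
  rwa [InnerProductSpace.toDual_apply_apply] at h

theorem mul_intervalIntegral_le_sub_of_hasDerivAt {φ φ' u : ℝ → ℝ} {a b μ : ℝ} (hab : a ≤ b)
    (hφ : ∀ x ∈ Icc a b, HasDerivAt φ (φ' x) x) (hu : IntegrableOn u (Icc a b))
    (hφ' : ∀ x ∈ Ioo a b, φ' x ≤ -μ * u x) :
    μ * ∫ x in a..b, u x ≤ φ a - φ b := by
  have h := intervalIntegral.sub_le_integral_of_hasDeriv_right_of_le hab
    (fun x hx => (hφ x hx).continuousAt.continuousWithinAt)
    (fun x hx => (hφ x (Ioo_subset_Icc_self hx)).hasDerivWithinAt) (hu.const_mul (-μ)) hφ'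
  rw [intervalIntegral.integral_const_mul] at h
  linarith

theorem setLIntegral_Ici_le_of_forall_Icc_le {ν : Measure ℝ} {F : ℝ → ENNReal} {a : ℝ}
    {C : ENNReal} (h : ∀ b, a ≤ b → ∫⁻ x in Icc a b, F x ∂ν ≤ C) :
    ∫⁻ x in Ici a, F x ∂ν ≤ C := by
  have hIci : Ici a = ⋃ n : ℕ, Icc a (a + n) := by
    ext x
    simp only [mem_Ici, mem_iUnion, mem_Icc]
    refine ⟨fun hx => ?_, fun ⟨_, hx, _⟩ => hx⟩
    obtain ⟨n, hn⟩ := exists_nat_ge (x - a)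
    exact ⟨n, hx, by linarith⟩
  have hmono : Monotone fun n : ℕ => Icc a (a + n) := fun m n hmn =>
    Icc_subset_Icc_right (by gcongr)
  rw [hIci, setLIntegral_iUnion_of_directed _ hmono.directed_le]
  exact iSup_le fun n => h _ (by simp)

theorem mul_integral_sq_norm_gradient_le {H : Type*} [NormedAddCommGroup H]
    [InnerProductSpace ℝ H] [CompleteSpace H] {f : H → ℝ} {g Y : H → H} {μ : ℝ} {ψ : ℝ → H}
    {a b : ℝ} (hf : ∀ x, HasGradientAt f (g x) x) (hY : ∀ x, ⟪g x, Y x⟫ ≤ -μ * ‖g x‖ ^ 2)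
    (hab : a ≤ b) (hψ : ∀ t ∈ Icc a b, HasDerivAt ψ (Y (ψ t)) t)
    (hint : IntegrableOn (fun t => ‖g (ψ t)‖ ^ 2) (Icc a b)) :
    μ * ∫ t in Icc a b, ‖g (ψ t)‖ ^ 2 ≤ f (ψ a) - f (ψ b) := by
  rw [integral_Icc_eq_integral_Ioc, ← intervalIntegral.integral_of_le hab]
  exact mul_intervalIntegral_le_sub_of_hasDerivAt hab
    (fun t ht => (hf (ψ t)).hasDerivAt_comp (hψ t ht)) hint (fun t _ => hY (ψ t))

/-- If `⟪∇f x, Y x⟫ ≤ -μ‖∇f x‖²` for all `x`, `ψ` is a flow line of `Y` on `[0, ∞)` and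
`f (ψ t) > c` for all `t ≥ 0`, then `∫₀^∞ ‖∇f(ψ t)‖² dt` is finite and bounded by
`(f (ψ 0) - c) / μ`. -/
theorem stmt8 {H : Type*} [NormedAddCommGroup H] [InnerProductSpace ℝ H] [CompleteSpace H]
    (f : H → ℝ) (g : H → H)
    (hf : ∀ x : H, HasGradientAt f (g x) x) (hgcont : Continuous g)
    (Y : H → H) (μ : ℝ) (hμ : 0 < μ)
    (h1 : ∀ x : H, ⟪g x, Y x⟫ ≤ -μ * ‖g x‖ ^ 2)
    (ψ : ℝ → H) (hψ : ∀ t : ℝ, 0 ≤ t → HasDerivAt ψ (Y (ψ t)) t)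
    (c : ℝ) (hc : ∀ t : ℝ, 0 ≤ t → c < f (ψ t)) :
    (∫⁻ t in Ici (0:ℝ), ENNReal.ofReal (‖g (ψ t)‖ ^ 2)) < ⊤ ∧
    (∫⁻ t in Ici (0:ℝ), ENNReal.ofReal (‖g (ψ t)‖ ^ 2)) ≤
      ENNReal.ofReal ((f (ψ 0) - c) / μ) := by
  have hIcc : ∀ T, 0 ≤ T → ∫⁻ t in Icc 0 T, ENNReal.ofReal (‖g (ψ t)‖ ^ 2) ≤
      ENNReal.ofReal ((f (ψ 0) - c) / μ) := by
    intro T hT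
    have hint : IntegrableOn (fun t => ‖g (ψ t)‖ ^ 2) (Icc 0 T) :=
      ContinuousOn.integrableOn_compact isCompact_Icc fun t ht =>
        ((hgcont.norm.pow 2).continuousAt.comp (hψ t ht.1).continuousAt).continuousWithinAt
    have hdiss := mul_integral_sq_norm_gradient_le hf h1 hT (fun t ht => hψ t ht.1) hint
    rw [← ofReal_integral_eq_lintegral_ofReal hint (.of_forall fun _ => sq_nonneg _)]
    exact ENNReal.ofReal_le_ofReal ((le_div_iff₀' hμ).2 (by linarith [hc T hT]))
  have hbound := setLIntegral_Ici_le_of_forall_Icc_le hIcc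
  exact ⟨hbound.trans_lt ENNReal.ofReal_lt_top, hbound⟩
end

section
/- Let H be a real Hilbert space and f : H → ℝ continuously Fréchet differentiable with continuous gradient ∇f. Let ψ : [0, ∞) → H be continuous with ∫₀^∞ ‖∇f(ψ(t))‖² dt < ∞, and assume the following Palais–Smale-type condition along ψ: for every sequence (tₙ) in [0, ∞) with ∇f(ψ(tₙ)) → 0, the sequence (ψ(tₙ)) has a subsequence converging in H. Then there exist a sequence tₙ → ∞ and a point x* ∈ H such that ψ(tₙ) → x* and ∇f(x*) = 0. -/
/-!
A nonnegative function with finite integral over `[a, ∞)` cannot stay above a fixed `ε > 0` on a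
tail, so `‖∇f (ψ t)‖²` is small at arbitrarily late times, giving `tₙ → ∞` with
`∇f (ψ tₙ) → 0`. The Palais–Smale condition extracts a convergent subsequence `ψ (tₙ) → x*`, and
continuity of `∇f` forces `∇f x* = 0`.
-/

open Set MeasureTheory Filter Topology

theorem exists_ge_lt_of_setLIntegral_Ici_ne_top {h : ℝ → ℝ} {a : ℝ}
    (hint : ∫⁻ t in Ici a, ENNReal.ofReal (h t) ≠ ⊤) (T : ℝ) {ε : ℝ} (hε : 0 < ε) :
    ∃ t, T ≤ t ∧ h t < ε := by
  by_contra! hge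
  have hsub : Ici (max a T) ⊆ Ici a := Ici_subset_Ici.2 (le_max_left a T)
  have hinfinite : ∫⁻ _ in Ici (max a T), ENNReal.ofReal ε = ⊤ := by
    rw [setLIntegral_const, Real.volume_Ici, ENNReal.mul_top (by simpa using hε)]
  refine hint (top_le_iff.1 ?_)
  calc ⊤ = ∫⁻ _ in Ici (max a T), ENNReal.ofReal ε := hinfinite.symm
    _ ≤ ∫⁻ t in Ici (max a T), ENNReal.ofReal (h t) :=
      setLIntegral_mono' measurableSet_Ici fun t ht =>
        ENNReal.ofReal_le_ofReal (hge t (le_of_max_le_right ht))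
    _ ≤ ∫⁻ t in Ici a, ENNReal.ofReal (h t) := lintegral_mono_set hsub

theorem exists_seq_tendsto_zero_of_setLIntegral_Ici_ne_top {h : ℝ → ℝ} {a : ℝ}
    (hnonneg : ∀ t, 0 ≤ h t) (hint : ∫⁻ t in Ici a, ENNReal.ofReal (h t) ≠ ⊤) :
    ∃ t : ℕ → ℝ, (∀ n : ℕ, (n : ℝ) ≤ t n) ∧ Tendsto (fun n => h (t n)) atTop (𝓝 0) := by
  choose t hge hlt using fun n : ℕ =>
    exists_ge_lt_of_setLIntegral_Ici_ne_top hint n (Nat.one_div_pos_of_nat (n := n))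
  exact ⟨t, hge, squeeze_zero (fun n => hnonneg _) (fun n => (hlt n).le)
    tendsto_one_div_add_atTop_nhds_zero_nat⟩

theorem stmt9_general {H : Type*} [NormedAddCommGroup H] (g : H → H) (hgcont : Continuous g) (ψ : ℝ → H)
    (hint : (∫⁻ t in Ici (0:ℝ), ENNReal.ofReal (‖g (ψ t)‖ ^ 2)) < ⊤)
    (hPS : ∀ t : ℕ → ℝ, (∀ n, 0 ≤ t n) →
      Tendsto (fun n => g (ψ (t n))) atTop (nhds 0) →
      ∃ φ : ℕ → ℕ, StrictMono φ ∧
        ∃ x : H, Tendsto (fun n => ψ (t (φ n))) atTop (nhds x)) :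
    ∃ (t : ℕ → ℝ) (x : H), (∀ n, 0 ≤ t n) ∧ Tendsto t atTop atTop ∧
      Tendsto (fun n => ψ (t n)) atTop (nhds x) ∧ g x = 0 := by
  obtain ⟨t, hge, hsq⟩ := exists_seq_tendsto_zero_of_setLIntegral_Ici_ne_top
    (fun t => sq_nonneg ‖g (ψ t)‖) hint.ne
  have hnonneg : ∀ n, 0 ≤ t n := fun n => (Nat.cast_nonneg n).trans (hge n)
  have hgrad : Tendsto (fun n => g (ψ (t n))) atTop (𝓝 0) := by
    rw [tendsto_zero_iff_norm_tendsto_zero]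
    simpa [Real.sqrt_sq (norm_nonneg _)] using hsq.sqrt
  obtain ⟨φ, hφ, x, hx⟩ := hPS t hnonneg hgrad
  refine ⟨t ∘ φ, x, fun n => hnonneg _, ?_, hx, ?_⟩
  · exact (tendsto_atTop_mono hge tendsto_natCast_atTop_atTop).comp hφ.tendsto_atTop
  · exact tendsto_nhds_unique ((hgcont.tendsto x).comp hx) (hgrad.comp hφ.tendsto_atTop)

/-- If `∫₀^∞ ‖∇f(ψ t)‖² dt < ∞` and a Palais–Smale-type condition holds along `ψ`, then
there are `tₙ → ∞` and `x*` with `ψ (tₙ) → x*` and `∇f(x*) = 0`. -/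
theorem stmt9 {H : Type*} [NormedAddCommGroup H] [InnerProductSpace ℝ H] [CompleteSpace H]
    (f : H → ℝ) (g : H → H)
    (hf : ∀ x : H, HasGradientAt f (g x) x) (hgcont : Continuous g)
    (ψ : ℝ → H) (hψcont : ContinuousOn ψ (Ici 0))
    (hint : (∫⁻ t in Ici (0:ℝ), ENNReal.ofReal (‖g (ψ t)‖ ^ 2)) < ⊤)
    (hPS : ∀ t : ℕ → ℝ, (∀ n, 0 ≤ t n) →
      Tendsto (fun n => g (ψ (t n))) atTop (nhds 0) →
      ∃ φ : ℕ → ℕ, StrictMono φ ∧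
        ∃ x : H, Tendsto (fun n => ψ (t (φ n))) atTop (nhds x)) :
    ∃ (t : ℕ → ℝ) (x : H), (∀ n, 0 ≤ t n) ∧ Tendsto t atTop atTop ∧
      Tendsto (fun n => ψ (t n)) atTop (nhds x) ∧ g x = 0 :=
  stmt9_general g hgcont ψ hint hPS
end
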